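/- arXiv:1811.09526 — 2 statements merged into one kernel-verified Lean document; each statement's English description precedes it below -/
import Mathlib

section
/- Let q be an odd prime power, G = GL(2,F_q), and C the Cartan subgroup. Then for every one-dimensional character ν of C, the induced representation Ind_C^G ν is multiplicity-free; that is, C is a multiplicity-free subgroup of GL(2,F_q). -/
open scoped BigOperators ComplexConjugate Classical

set_option linter.unusedSectionVars false
set_option synthInstance.maxHeartbeats 1000000
set_option maxHeartbeats 1000000

noncomputable section

namespace GLMF

/-- Left translation of functions on `G`: `(translate h f) g = f (h⁻¹ * g)`. -/
def translate {G A : Type} [Group G] (h : G) (f : G → A) : G → A := fun g => f (h⁻¹ * g)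

/-- Irreducibility of a representation. -/
def IsIrreducibleRep {H W : Type} [Group H] [AddCommGroup W] [Module ℂ W]
    (ρ : H →* (W ≃ₗ[ℂ] W)) : Prop :=
  (⊥ : Submodule ℂ W) ≠ ⊤ ∧
    ∀ p : Submodule ℂ W, (∀ (h : H) (x : W), x ∈ p → ρ h x ∈ p) → p = ⊥ ∨ p = ⊤

/-- The space of the representation of `G` induced by a one-dimensional character `χ` of the
subgroup `K`: functions `f : G → ℂ` with `f (g k) = χ(k)⁻¹ f g`. -/
def indChar {G : Type} [Group G] (K : Subgroup G) (χ : ↥K →* ℂ) : Submodule ℂ (G → ℂ) where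
  carrier := {f | ∀ (g : G) (k : K), f (g * (k : G)) = (χ k)⁻¹ * f g}
  add_mem' := by
    intro a b ha hb g k
    simp only [Pi.add_apply, ha g k, hb g k, mul_add]
  zero_mem' := by intro g k; simp
  smul_mem' := by
    intro c a ha g k
    simp only [Pi.smul_apply, smul_eq_mul, ha g k]
    ring

/-- The space `Hom_G(W, Ind_K^G χ)` of `G`-equivariant linear maps from `(σ, W)` to the
representation induced by the character `χ`. -/
def homGIndChar {G : Type} [Group G] (K : Subgroup G) (χ : ↥K →* ℂ)
    {W : Type} [AddCommGroup W] [Module ℂ W] (σ : G →* (W ≃ₗ[ℂ] W)) :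
    Submodule ℂ (W →ₗ[ℂ] (G → ℂ)) where
  carrier := {A | (∀ w : W, A w ∈ indChar K χ) ∧
    ∀ (g : G) (w : W), A (σ g w) = translate g (A w)}
  add_mem' := by
    rintro A B ⟨hA₁, hA₂⟩ ⟨hB₁, hB₂⟩
    refine ⟨fun w => (indChar K χ).add_mem (hA₁ w) (hB₁ w), fun g w => ?_⟩
    funext x
    simp [translate, hA₂ g w, hB₂ g w]
  zero_mem' := by
    refine ⟨fun w => (indChar K χ).zero_mem, fun g w => ?_⟩
    funext x
    simp [translate]
  smul_mem' := by
    rintro c A ⟨hA₁, hA₂⟩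
    refine ⟨fun w => (indChar K χ).smul_mem c (hA₁ w), fun g w => ?_⟩
    funext x
    simp [translate, hA₂ g w]

/-- The representation of `G` induced by the one-dimensional character `χ` of `K ≤ G` is
multiplicity-free: every irreducible representation of `G` occurs in it with multiplicity at
most `1`. -/
def IsMultFreeChar {G : Type} [Group G] (K : Subgroup G) (χ : ↥K →* ℂ) : Prop :=
  ∀ (W : Type) [AddCommGroup W] [Module ℂ W] [FiniteDimensional ℂ W]
    (σ : G →* (W ≃ₗ[ℂ] W)), IsIrreducibleRep σ →
      Module.finrank ℂ ↥(homGIndChar K χ σ) ≤ 1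

variable (F : Type) [Field F] [Fintype F] [DecidableEq F]

/-- The unipotent subgroup `U = {(1 b; 0 1) : b ∈ F}` of `GL(2,F)`. -/
def unipotent : Subgroup (Matrix.GeneralLinearGroup (Fin 2) F) where
  carrier := {g | ∃ b : F, (g : Matrix (Fin 2) (Fin 2) F) = !![1, b; 0, 1]}
  one_mem' := ⟨0, by simp [Matrix.one_fin_two]⟩
  mul_mem' := by
    rintro x y ⟨b, hx⟩ ⟨d, hy⟩
    refine ⟨d + b, ?_⟩
    show ((x * y : Matrix.GeneralLinearGroup (Fin 2) F) : Matrix (Fin 2) (Fin 2) F) = _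
    rw [Units.val_mul, hx, hy, Matrix.mul_fin_two]
    norm_num
  inv_mem' := by
    rintro x ⟨b, hx⟩
    refine ⟨-b, ?_⟩
    have h : (x : Matrix (Fin 2) (Fin 2) F) * !![1, -b; 0, 1] = 1 := by
      rw [hx, Matrix.mul_fin_two]
      norm_num
      exact Matrix.one_fin_two.symm
    exact Units.inv_eq_of_mul_eq_one_right h

/-- The Cartan subgroup `C = {(a ηb; b a)}` of `GL(2,F)`, where `η` is a fixed generator of
the multiplicative group `F*`. -/
def cartan (eta : F) : Subgroup (Matrix.GeneralLinearGroup (Fin 2) F) where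
  carrier := {g | ∃ a b : F, (g : Matrix (Fin 2) (Fin 2) F) = !![a, eta * b; b, a]}
  one_mem' := ⟨1, 0, by rw [mul_zero]; exact Matrix.one_fin_two⟩
  mul_mem' := by
    rintro x y ⟨a, b, hx⟩ ⟨c, d, hy⟩
    refine ⟨a * c + eta * b * d, a * d + b * c, ?_⟩
    show ((x * y : Matrix.GeneralLinearGroup (Fin 2) F) : Matrix (Fin 2) (Fin 2) F) = _
    rw [Units.val_mul, hx, hy, Matrix.mul_fin_two]
    congr 1 <;> ring
  inv_mem' := by
    rintro x ⟨a, b, hx⟩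
    have hdet : a * a - eta * b * b ≠ 0 := by
      have hu : IsUnit ((x : Matrix (Fin 2) (Fin 2) F)).det :=
        (Matrix.isUnit_iff_isUnit_det _).mp x.isUnit
      rw [hx, Matrix.det_fin_two_of] at hu
      simpa [isUnit_iff_ne_zero, mul_comm, mul_assoc, mul_left_comm, sub_eq_iff_eq_add]
        using hu
    set D : F := a * a - eta * b * b with hD
    refine ⟨a / D, -(b / D), ?_⟩
    have h : (x : Matrix (Fin 2) (Fin 2) F) * !![a / D, eta * -(b / D); -(b / D), a / D] = 1 := by
      rw [hx, Matrix.mul_fin_two]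
      have : ∀ u v w z : F, u = 1 → v = 0 → w = 0 → z = 1 → !![u, v; w, z] = 1 := by
        rintro u v w z rfl rfl rfl rfl
        exact Matrix.one_fin_two.symm
      refine this _ _ _ _ ?_ ?_ ?_ ?_ <;> field_simp <;> ring
    exact Units.inv_eq_of_mul_eq_one_right h

/-- The embedding `GL(2,F) → GL(2,K)` induced by a field extension `F ⊆ K`. -/
def glEmbed (K : Type) [Field K] [Fintype K] [DecidableEq K] [Algebra F K] :
    Matrix.GeneralLinearGroup (Fin 2) F →* Matrix.GeneralLinearGroup (Fin 2) K :=
  Units.map ((algebraMap F K).mapMatrix).toMonoidHom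

/-!
Gelfand's trick. For an irreducible `(σ, W)` let `W^ν` be the subspace on which `K` acts by `ν`
and `P` the averaging projection onto it. Evaluation at `1` embeds `Hom_G(W, Ind ν)` into the dual
of `W^ν`, so it suffices that `dim W^ν ≤ 1`. The Hecke operators `Φ g = P ∘ σ g` on `W^ν` satisfy
`Φ g Φ h = |K|⁻¹ ∑ₖ ν(k)⁻¹ Φ(g k h)` and are invariant under `K`-conjugation of `g`, so an
anti-automorphism `τ` of `G` fixing `K` pointwise and preserving `K`-conjugacy classes makes them
commute. By irreducibility every nonzero vector of `W^ν` is cyclic for this commuting family, which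
forces `dim W^ν ≤ 1`.

For the Cartan subgroup of `GL(2, F_q)` take `τ g = s gᵀ s⁻¹` with `s = diag(η, 1)`: it fixes `C`,
and for every `g` some `c ∈ C` makes `g c` fixed by `τ`; the only obstruction would be a solution
of `a² = η b²` with `b ≠ 0`, impossible since the generator `η` is not a square.
-/

/-- An eigenspace of `T i` is stable under all `T j`, hence contains a cyclic vector and is
everything: each `T i` is a scalar. -/
theorem finrank_le_one_of_commute_of_span_eq_top {k V ι : Type*} [Field k] [IsAlgClosed k]
    [AddCommGroup V] [Module k V] [FiniteDimensional k V] (T : ι → Module.End k V)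
    (hT : ∀ i j, Commute (T i) (T j))
    (hcyc : ∀ v : V, v ≠ 0 → Submodule.span k (Set.range fun i => T i v) = ⊤) :
    Module.finrank k V ≤ 1 := by
  nontriviality V
  have hscalar : ∀ i, ∃ c : k, ∀ x, T i x = c • x := fun i => by
    obtain ⟨c, hc⟩ := (T i).exists_eigenvalue
    obtain ⟨v, hv⟩ := hc.exists_hasEigenvector
    have hle : Submodule.span k (Set.range fun j => T j v) ≤ (T i).eigenspace c := by
      refine Submodule.span_le.mpr ?_
      rintro _ ⟨j, rfl⟩
      rw [SetLike.mem_coe, Module.End.mem_eigenspace_iff, ← Module.End.mul_apply, (hT i j).eq,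
        Module.End.mul_apply, hv.apply_eq_smul, map_smul]
    rw [hcyc v hv.2, top_le_iff] at hle
    exact ⟨c, fun x => Module.End.mem_eigenspace_iff.mp (hle ▸ Submodule.mem_top)⟩
  obtain ⟨v, hv⟩ := exists_ne (0 : V)
  refine finrank_le_one v fun w => ?_
  have hw : w ∈ Submodule.span k (Set.range fun i => T i v) := hcyc v hv ▸ Submodule.mem_top
  refine Submodule.mem_span_singleton.mp (Submodule.span_le.mpr ?_ hw)
  rintro _ ⟨i, rfl⟩
  obtain ⟨c, hc⟩ := hscalar i
  rw [SetLike.mem_coe, Submodule.mem_span_singleton]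
  exact ⟨c, (hc v).symm⟩

lemma IsIrreducibleRep.span_orbit_eq_top {H W : Type} [Group H] [AddCommGroup W] [Module ℂ W]
    {ρ : H →* (W ≃ₗ[ℂ] W)} (hρ : IsIrreducibleRep ρ) {u : W} (hu : u ≠ 0) :
    Submodule.span ℂ (Set.range fun h => ρ h u) = ⊤ := by
  refine (hρ.2 _ fun h x hx => ?_).resolve_left fun hbot => hu ?_
  · have hmap := Submodule.mem_map_of_mem (f := (ρ h).toLinearMap) hx
    rw [Submodule.map_span, ← Set.range_comp] at hmap
    refine Submodule.span_le.mpr ?_ hmap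
    rintro _ ⟨g, rfl⟩
    exact Submodule.subset_span ⟨h * g, by simp [map_mul]⟩
  · rw [← Submodule.mem_bot ℂ, ← hbot]
    exact Submodule.subset_span ⟨1, by simp⟩

lemma character_ne_zero {H : Type} [Group H] (χ : H →* ℂ) (h : H) : χ h ≠ 0 :=
  (χ.toHomUnits h).ne_zero

section IsotypicProjection

variable {G : Type} [Group G] (K : Subgroup G) [Fintype K] (ν : K →* ℂ)
  {W : Type} [AddCommGroup W] [Module ℂ W] (σ : G →* (W ≃ₗ[ℂ] W))

def isotypicProj : Module.End ℂ W :=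
  (Fintype.card K : ℂ)⁻¹ • ∑ k : K, (ν k)⁻¹ • (σ k).toLinearMap

lemma isotypicProj_apply (w : W) :
    isotypicProj K ν σ w = (Fintype.card K : ℂ)⁻¹ • ∑ k : K, (ν k)⁻¹ • σ k w := by
  simp [isotypicProj, LinearMap.sum_apply]

lemma map_isotypicProj (c : K) (w : W) :
    σ c (isotypicProj K ν σ w) = ν c • isotypicProj K ν σ w := by
  rw [isotypicProj_apply, map_smul, map_sum, smul_comm (ν c)]
  congr 1
  rw [Finset.smul_sum]
  refine Fintype.sum_equiv (Equiv.mulLeft c) _ _ fun k => ?_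
  simp only [Equiv.coe_mulLeft, Subgroup.coe_mul, map_mul, LinearEquiv.mul_apply, map_smul,
    smul_smul, mul_inv, mul_inv_cancel_left₀ (character_ne_zero ν c)]

lemma isotypicProj_map (c : K) (w : W) :
    isotypicProj K ν σ (σ c w) = ν c • isotypicProj K ν σ w := by
  rw [isotypicProj_apply, isotypicProj_apply, smul_comm (ν c)]
  congr 1
  rw [Finset.smul_sum]
  refine Fintype.sum_equiv (Equiv.mulRight c) _ _ fun k => ?_
  simp only [Equiv.coe_mulRight, Subgroup.coe_mul, map_mul, LinearEquiv.mul_apply, smul_smul,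
    mul_inv_rev, mul_inv_cancel_left₀ (character_ne_zero ν c)]

abbrev isotypic : Submodule ℂ W := LinearMap.range (isotypicProj K ν σ)

variable {K ν σ}

lemma map_of_mem_isotypic {w : W} (hw : w ∈ isotypic K ν σ) (c : K) : σ c w = ν c • w := by
  obtain ⟨w, rfl⟩ := hw
  exact map_isotypicProj K ν σ c w

end IsotypicProjection

section HeckeOperators

variable {G : Type} [Group G] (K : Subgroup G) [Fintype K] (ν : K →* ℂ)
  {W : Type} [AddCommGroup W] [Module ℂ W] (σ : G →* (W ≃ₗ[ℂ] W))

def heckeOp (g : G) : Module.End ℂ (isotypic K ν σ) :=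
  (isotypicProj K ν σ).rangeRestrict ∘ₗ (σ g).toLinearMap ∘ₗ (isotypic K ν σ).subtype

lemma coe_heckeOp_apply (g : G) (v : isotypic K ν σ) :
    (heckeOp K ν σ g v : W) = isotypicProj K ν σ (σ g v) := rfl

lemma heckeOp_mul_mul (c c' : K) (x : G) :
    heckeOp K ν σ (c * x * c') = (ν c * ν c') • heckeOp K ν σ x := by
  ext v
  simp only [coe_heckeOp_apply, map_mul, LinearEquiv.mul_apply, LinearMap.smul_apply,
    Submodule.coe_smul, map_of_mem_isotypic v.2, map_smul, isotypicProj_map, smul_smul, mul_comm]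

lemma heckeOp_conj (c : K) (x : G) : heckeOp K ν σ ((c : G)⁻¹ * x * c) = heckeOp K ν σ x := by
  rw [← Subgroup.coe_inv, heckeOp_mul_mul, ← map_mul, inv_mul_cancel, map_one, one_smul]

lemma heckeOp_mul_heckeOp (g h : G) :
    heckeOp K ν σ g * heckeOp K ν σ h =
      (Fintype.card K : ℂ)⁻¹ • ∑ k : K, (ν k)⁻¹ • heckeOp K ν σ (g * k * h) := by
  ext v
  simp only [Module.End.mul_apply, coe_heckeOp_apply, LinearMap.smul_apply, LinearMap.sum_apply,
    Submodule.coe_smul, Submodule.coe_sum]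
  rw [isotypicProj_apply K ν σ (σ h v)]
  simp only [map_smul, map_sum, map_mul, LinearEquiv.mul_apply]

lemma heckeOp_commute (τ : G → G) (hmul : ∀ x y, τ (x * y) = τ y * τ x)
    (hK : ∀ k : K, τ k = k) (hconj : ∀ g, ∃ c : K, τ g = (c : G)⁻¹ * g * c) (g h : G) :
    Commute (heckeOp K ν σ g) (heckeOp K ν σ h) := by
  have hτ : ∀ x, heckeOp K ν σ (τ x) = heckeOp K ν σ x := fun x => by
    obtain ⟨c, hc⟩ := hconj x
    rw [hc, heckeOp_conj]
  have hterm : ∀ k : K, heckeOp K ν σ (g * k * h) = heckeOp K ν σ (τ h * k * τ g) := fun k => by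
    rw [← hτ, hmul, hmul, hK, mul_assoc]
  calc heckeOp K ν σ g * heckeOp K ν σ h
      = (Fintype.card K : ℂ)⁻¹ • ∑ k : K, (ν k)⁻¹ • heckeOp K ν σ (g * k * h) :=
        heckeOp_mul_heckeOp K ν σ g h
    _ = heckeOp K ν σ (τ h) * heckeOp K ν σ (τ g) := by
        simp only [hterm, heckeOp_mul_heckeOp]
    _ = heckeOp K ν σ h * heckeOp K ν σ g := by rw [hτ, hτ]

lemma span_heckeOp_orbit_eq_top (hσ : IsIrreducibleRep σ) {v : isotypic K ν σ} (hv : v ≠ 0) :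
    Submodule.span ℂ (Set.range fun g => heckeOp K ν σ g v) = ⊤ := by
  have hrange : (Set.range fun g => heckeOp K ν σ g v) =
      (isotypicProj K ν σ).rangeRestrict '' Set.range fun g => σ g v := by
    rw [← Set.range_comp]; rfl
  rw [hrange, ← Submodule.map_span, hσ.span_orbit_eq_top (Subtype.coe_ne_coe.mpr hv),
    Submodule.map_top, LinearMap.range_rangeRestrict]

end HeckeOperators

section Frobenius

variable {G : Type} [Group G] {K : Subgroup G} {ν : K →* ℂ}
  {W : Type} [AddCommGroup W] [Module ℂ W] {σ : G →* (W ≃ₗ[ℂ] W)} (A : homGIndChar K ν σ)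

lemma homGIndChar_apply (w : W) (g : G) : A.1 w g = A.1 (σ g⁻¹ w) 1 := by
  rw [A.2.2]
  simp [translate]

lemma homGIndChar_apply_map_one (k : K) (w : W) : A.1 (σ k w) 1 = ν k * A.1 w 1 := by
  rw [A.2.2]
  simp only [translate]
  rw [mul_one, ← one_mul ((k : G)⁻¹), ← Subgroup.coe_inv, A.2.1, map_inv, inv_inv]

variable [Fintype K]

lemma homGIndChar_apply_isotypicProj_one (w : W) : A.1 (isotypicProj K ν σ w) 1 = A.1 w 1 := by
  have hcard : (Fintype.card K : ℂ) ≠ 0 := Nat.cast_ne_zero.mpr Fintype.card_ne_zero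
  simp [isotypicProj_apply, homGIndChar_apply_map_one, character_ne_zero, hcard]

variable (K ν σ)

def evalOne : homGIndChar K ν σ →ₗ[ℂ] Module.Dual ℂ (isotypic K ν σ) where
  toFun A := LinearMap.proj 1 ∘ₗ A.1 ∘ₗ (isotypic K ν σ).subtype
  map_add' _ _ := rfl
  map_smul' _ _ := rfl

lemma evalOne_injective : Function.Injective (evalOne K ν σ) := by
  refine (injective_iff_map_eq_zero _).mpr fun A hA => Subtype.ext (LinearMap.ext fun w => ?_)
  funext g
  have hvanish : ∀ v : isotypic K ν σ, A.1 v 1 = 0 := fun v => LinearMap.congr_fun hA v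
  rw [homGIndChar_apply, ← homGIndChar_apply_isotypicProj_one]
  exact hvanish ⟨_, LinearMap.mem_range_self _ _⟩

lemma finrank_homGIndChar_le [FiniteDimensional ℂ W] :
    Module.finrank ℂ (homGIndChar K ν σ) ≤ Module.finrank ℂ (isotypic K ν σ) :=
  (LinearMap.finrank_le_finrank_of_injective (evalOne_injective K ν σ)).trans_eq
    Subspace.dual_finrank_eq

end Frobenius

theorem isMultFreeChar_of_antiHom {G : Type} [Group G] (K : Subgroup G) [Finite K] (ν : K →* ℂ)
    (τ : G → G) (hmul : ∀ x y, τ (x * y) = τ y * τ x) (hK : ∀ k : K, τ k = k)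
    (hconj : ∀ g, ∃ c : K, τ g = (c : G)⁻¹ * g * c) :
    IsMultFreeChar K ν := by
  intro W _ _ _ σ hσ
  have := Fintype.ofFinite K
  exact (finrank_homGIndChar_le K ν σ).trans
    (finrank_le_one_of_commute_of_span_eq_top (heckeOp K ν σ)
      (heckeOp_commute K ν σ τ hmul hK hconj) fun _ hv => span_heckeOp_orbit_eq_top K ν σ hσ hv)

lemma not_isSquare_of_forall_mem_zpowers {K : Type*} [Field K] [Fintype K]
    (hodd : Odd (Fintype.card K)) {eta : Kˣ} (heta : ∀ x : Kˣ, x ∈ Subgroup.zpowers eta) :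
    ¬IsSquare (eta : K) := by
  intro hsq
  have hchar : ringChar K ≠ 2 := by
    rw [Ne, FiniteField.even_card_iff_char_two, Nat.odd_iff.mp hodd]
    decide
  obtain ⟨a, ha⟩ := FiniteField.exists_nonsquare hchar
  have ha0 : a ≠ 0 := by
    rintro rfl
    exact ha IsSquare.zero
  obtain ⟨n, hn⟩ := Subgroup.mem_zpowers_iff.mp (heta (Units.mk0 a ha0))
  have han : (eta : K) ^ n = a := by rw [← Units.val_zpow_eq_zpow_val, hn, Units.val_mk0]
  exact ha (han ▸ hsq.zpow n)

lemma mul_self_sub_mul_mul_self_ne_zero {K : Type*} [Field K] {eta : K} (heta : ¬IsSquare eta)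
    (a : K) {b : K} (hb : b ≠ 0) : a * a - eta * b * b ≠ 0 := by
  refine fun h => heta ⟨a / b, ?_⟩
  field_simp
  linear_combination -h

section TwistedTranspose

variable {n R : Type*} [Fintype n] [DecidableEq n] [CommRing R]

def transposeGL : Matrix.GeneralLinearGroup n R →* (Matrix.GeneralLinearGroup n R)ᵐᵒᵖ :=
  Units.opEquiv.toMonoidHom.comp (Units.map (Matrix.transposeRingEquiv n R).toMonoidHom)

lemma coe_unop_transposeGL (g : Matrix.GeneralLinearGroup n R) :
    ((transposeGL g).unop : Matrix n n R) = (g : Matrix n n R).transpose := rfl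

def diagUnitOne (eta : Rˣ) : Matrix.GeneralLinearGroup (Fin 2) R :=
  ⟨!![(eta : R), 0; 0, 1], !![((eta⁻¹ : Rˣ) : R), 0; 0, 1],
    by simp [Matrix.one_fin_two], by simp [Matrix.one_fin_two]⟩

def twistedTranspose (eta : Rˣ) (g : Matrix.GeneralLinearGroup (Fin 2) R) :
    Matrix.GeneralLinearGroup (Fin 2) R :=
  diagUnitOne eta * (transposeGL g).unop * (diagUnitOne eta)⁻¹

lemma twistedTranspose_mul (eta : Rˣ) (x y : Matrix.GeneralLinearGroup (Fin 2) R) :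
    twistedTranspose eta (x * y) = twistedTranspose eta y * twistedTranspose eta x := by
  simp only [twistedTranspose, map_mul, MulOpposite.unop_mul]
  group

lemma twistedTranspose_eq_self {eta : Rˣ} {g : Matrix.GeneralLinearGroup (Fin 2) R}
    (hg : (g : Matrix (Fin 2) (Fin 2) R) 0 1 = eta * (g : Matrix (Fin 2) (Fin 2) R) 1 0) :
    twistedTranspose eta g = g := by
  rw [twistedTranspose, mul_inv_eq_iff_eq_mul]
  ext i j
  rw [Units.val_mul, Units.val_mul, coe_unop_transposeGL]
  fin_cases i <;> fin_cases j <;> simp [Matrix.mul_apply, diagUnitOne, hg, mul_comm]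

end TwistedTranspose

section Cartan

variable {k : Type} [Field k]

lemma twistedTranspose_cartan {eta : kˣ} (c : cartan k (eta : k)) :
    twistedTranspose eta (c : Matrix.GeneralLinearGroup (Fin 2) k) = c := by
  obtain ⟨a, b, hc⟩ := c.2
  exact twistedTranspose_eq_self (by simp [hc])

/-- `g c` is fixed by `twistedTranspose` for `c = (a ηb; b a)` with `a = η (g₀₀ - g₁₁)` and
`b = η g₁₀ - g₀₁`; this `c` is invertible because `η` is not a square. -/
lemma exists_twistedTranspose_eq_conj {eta : kˣ} (heta : ¬IsSquare (eta : k))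
    (g : Matrix.GeneralLinearGroup (Fin 2) k) :
    ∃ c : cartan k (eta : k),
      twistedTranspose eta g = (c : Matrix.GeneralLinearGroup (Fin 2) k)⁻¹ * g * c := by
  set M := (g : Matrix (Fin 2) (Fin 2) k)
  by_cases hfix : M 0 1 = eta * M 1 0
  · exact ⟨1, by simp [twistedTranspose_eq_self hfix]⟩
  set a := (eta : k) * (M 0 0 - M 1 1)
  set b := (eta : k) * M 1 0 - M 0 1
  have hdet : (!![a, (eta : k) * b; b, a]).det ≠ 0 := by
    rw [Matrix.det_fin_two_of]
    exact mul_self_sub_mul_mul_self_ne_zero heta a (sub_ne_zero.mpr (Ne.symm hfix))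
  let c : cartan k (eta : k) := ⟨.mkOfDetNeZero _ hdet, a, b, rfl⟩
  have hgc : twistedTranspose eta (g * c) = g * c := by
    refine twistedTranspose_eq_self ?_
    simp only [Units.val_mul, Matrix.GeneralLinearGroup.val_mkOfDetNeZero, Matrix.mul_apply,
      Fin.sum_univ_two, Matrix.of_apply, Matrix.cons_val', Matrix.cons_val_zero,
      Matrix.cons_val_one, Matrix.cons_val_fin_one, c, a, b]
    ring
  refine ⟨c, ?_⟩
  rw [twistedTranspose_mul, twistedTranspose_cartan] at hgc
  rw [mul_assoc, ← hgc, inv_mul_cancel_left]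

end Cartan

/-- Let `q` be an odd prime power and `η` a generator of `F_q*`.  Then for
every one-dimensional character `ν` of the Cartan subgroup `C`, the induced representation
`Ind_C^{GL(2,F_q)} ν` is multiplicity-free; i.e. `C` is a multiplicity-free subgroup. -/
theorem statement17 (hodd : Odd (Fintype.card F)) (eta : Fˣ)
    (heta : ∀ x : Fˣ, x ∈ Subgroup.zpowers eta)
    (ν : ↥(cartan F (eta : F)) →* ℂ) :
    IsMultFreeChar (cartan F (eta : F)) ν :=
  isMultFreeChar_of_antiHom _ ν (twistedTranspose eta) (twistedTranspose_mul eta)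
    twistedTranspose_cartan
    (exists_twistedTranspose_eq_conj (not_isSquare_of_forall_mem_zpowers hodd heta))

end GLMF
end
end

section
/- Let q be an odd prime power, G = GL(2,F_q), and U = {(1 b; 0 1) : b ∈ F_q} the unipotent subgroup. Then (G,U,χ) is a multiplicity-free triple for every nontrivial character χ of U, but (G,U) is not a Gelfand pair: the induced representation Ind_U^G χ₀ of the trivial character χ₀ of U is not multiplicity-free — there exists an irreducible representation of G occurring in Ind_U^G χ₀ with multiplicity 2. -/
open scoped BigOperators ComplexConjugate Classical

set_option linter.unusedSectionVars false
set_option synthInstance.maxHeartbeats 1000000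
set_option maxHeartbeats 1000000

noncomputable section

namespace GLMF

variable (F : Type) [Field F] [Fintype F] [DecidableEq F]

/-- A bundled finite-dimensional complex representation of a group `G`. -/
structure RepWitness (G : Type) [Group G] where
  W : Type
  [acg : AddCommGroup W]
  [mod : Module ℂ W]
  [fd : FiniteDimensional ℂ W]
  σ : G →* (W ≃ₗ[ℂ] W)

attribute [instance] RepWitness.acg RepWitness.mod RepWitness.fd

/-!
For `χ ≠ 1` this is Gelfand's trick. The anti-involution `τ (a b; c d) = (d b; c a)` fixes `U`
pointwise. Using the Bruhat decomposition, one checks that it fixes every `χ`-bi-equivariant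
function on `G`. Hence convolution of such functions is commutative, so the equivariant
endomorphisms of `Ind_U^G χ` commute, and Schur's lemma then bounds every multiplicity by `1`.

For `χ = χ₀`, take a nontrivial character `μ` of `F^×` (the quadratic character, `q` being
odd) and the principal series `π = Ind_B^G (μ ⊗ 1)`. It is irreducible because `μ ≠ 1`. By
Frobenius reciprocity, `Hom_G(π, Ind_U^G χ₀)` is the space of `U`-invariant functionals on `π`.
Since `π` is spanned by the vector supported on `B` and its translates to the big cell
`U w B`, these functionals are the combinations of evaluation at `1` and summation over the
big cell, so the space has dimension `2`.
-/

section InducedRepresentation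

variable {G : Type} [Group G]

@[simp] lemma translate_apply {A : Type} (h : G) (f : G → A) (g : G) :
    translate h f g = f (h⁻¹ * g) := rfl

lemma translate_translate {A : Type} (a b : G) (f : G → A) :
    translate a (translate b f) = translate (a * b) f := by
  funext x; simp [mul_assoc]

lemma translate_one {A : Type} (f : G → A) : translate (1 : G) f = f := by
  funext x; simp

lemma translate_mem_indChar (K : Subgroup G) (χ : K →* ℂ) (h : G) {f : G → ℂ}
    (hf : f ∈ indChar K χ) : translate h f ∈ indChar K χ := by
  intro g k
  simpa only [translate_apply, mul_assoc] using hf (h⁻¹ * g) k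

def indRep (K : Subgroup G) (χ : K →* ℂ) : G →* (indChar K χ ≃ₗ[ℂ] indChar K χ) where
  toFun h :=
    { toFun := fun f => ⟨translate h f, translate_mem_indChar K χ h f.2⟩
      invFun := fun f => ⟨translate h⁻¹ f, translate_mem_indChar K χ h⁻¹ f.2⟩
      map_add' := fun _ _ => rfl
      map_smul' := fun _ _ => rfl
      left_inv := fun f => Subtype.ext <| by simp [translate_translate, translate_one]
      right_inv := fun f => Subtype.ext <| by simp [translate_translate, translate_one] }
  map_one' := by ext f : 2; exact translate_one (f : G → ℂ)
  map_mul' g h := by ext f : 2; exact (translate_translate g h (f : G → ℂ)).symm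

@[simp] lemma coe_indRep_apply (K : Subgroup G) (χ : K →* ℂ) (h : G) (f : indChar K χ) :
    ((indRep K χ h f : indChar K χ) : G → ℂ) = translate h f := rfl

@[simp] lemma coe_indRep_symm_apply (K : Subgroup G) (χ : K →* ℂ) (h : G) (f : indChar K χ) :
    (((indRep K χ h).symm f : indChar K χ) : G → ℂ) = translate h⁻¹ f := rfl

variable {W : Type} [AddCommGroup W] [Module ℂ W]

lemma IsIrreducibleRep.exists_eq_smul_of_commute [FiniteDimensional ℂ W]
    {σ : G →* (W ≃ₗ[ℂ] W)} (hσ : IsIrreducibleRep σ) (T : W →ₗ[ℂ] W)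
    (hT : ∀ (g : G) (w : W), T (σ g w) = σ g (T w)) : ∃ c : ℂ, ∀ w, T w = c • w := by
  have : Nontrivial W := by
    by_contra h
    have := not_nontrivial_iff_subsingleton.mp h
    exact hσ.1 (Subsingleton.elim _ _)
  obtain ⟨c, hc⟩ := Module.End.exists_eigenvalue T
  refine ⟨c, fun w => Module.End.mem_eigenspace_iff.mp ?_⟩
  rcases hσ.2 (Module.End.eigenspace T c) fun g x hx => by
      rw [Module.End.mem_eigenspace_iff] at hx ⊢
      rw [hT, hx, map_smul] with h | h
  · exact absurd h (Module.End.hasEigenvalue_iff.mp hc)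
  · exact h ▸ Submodule.mem_top

lemma IsIrreducibleRep.ker_eq_bot {V : Type} [AddCommGroup V] [Module ℂ V]
    {σ : G →* (W ≃ₗ[ℂ] W)} (hσ : IsIrreducibleRep σ) {A : W →ₗ[ℂ] V} (hA : A ≠ 0)
    (hker : ∀ (g : G) (w : W), A w = 0 → A (σ g w) = 0) : LinearMap.ker A = ⊥ :=
  (hσ.2 _ hker).resolve_right fun h => hA (LinearMap.ker_eq_top.mp h)

def equivariantDual (K : Subgroup G) (χ : K →* ℂ) (σ : G →* (W ≃ₗ[ℂ] W)) :
    Submodule ℂ (Module.Dual ℂ W) where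
  carrier := {ℓ | ∀ (k : K) (w : W), ℓ (σ k w) = χ k * ℓ w}
  add_mem' hℓ hℓ' k w := by simp [hℓ k w, hℓ' k w, mul_add]
  zero_mem' k w := by simp
  smul_mem' c ℓ hℓ k w := by simp [hℓ k w, mul_left_comm]

def frobeniusReciprocity (K : Subgroup G) (χ : K →* ℂ) (σ : G →* (W ≃ₗ[ℂ] W)) :
    homGIndChar K χ σ ≃ₗ[ℂ] equivariantDual K χ σ where
  toFun A := ⟨LinearMap.proj 1 ∘ₗ A.1, fun k w => by
    have h := A.2.1 w 1 k⁻¹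
    simp only [one_mul, Subgroup.coe_inv, map_inv, inv_inv] at h
    simp [A.2.2, h]⟩
  invFun ℓ := ⟨LinearMap.pi fun x => ℓ.1 ∘ₗ (σ x⁻¹).toLinearMap,
    fun w x k => by simpa [mul_inv_rev] using ℓ.2 k⁻¹ (σ x⁻¹ w),
    fun g w => by ext x; simp [mul_inv_rev, map_mul]⟩
  map_add' _ _ := rfl
  map_smul' _ _ := rfl
  left_inv A := by
    ext w x
    simpa using congrFun (A.2.2 x⁻¹ w) 1
  right_inv ℓ := by
    ext w
    simp

end InducedRepresentation

section GelfandTrick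

variable {G : Type} [Group G] {W : Type} [AddCommGroup W] [Module ℂ W]

/-- Averaging a linear left inverse of an equivariant injection over `G` makes it equivariant. -/
lemma exists_equivariant_leftInverse [Fintype G] {σ : G →* (W ≃ₗ[ℂ] W)}
    {A : W →ₗ[ℂ] (G → ℂ)} (hA : ∀ (g : G) (w : W), A (σ g w) = translate g (A w))
    (hker : LinearMap.ker A = ⊥) :
    ∃ π : (G → ℂ) →ₗ[ℂ] W, (∀ w, π (A w) = w) ∧
      ∀ (h : G) (f : G → ℂ), π (translate h f) = σ h (π f) := by
  obtain ⟨p, hp⟩ := A.exists_leftInverse_of_injective hker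
  have hpA (w : W) : p (A w) = w := LinearMap.ext_iff.mp hp w
  have hcard : (Fintype.card G : ℂ) ≠ 0 := Nat.cast_ne_zero.mpr Fintype.card_ne_zero
  refine ⟨(Fintype.card G : ℂ)⁻¹ •
    ∑ g : G, (σ g).toLinearMap ∘ₗ p ∘ₗ LinearMap.funLeft ℂ ℂ (g * ·), fun w => ?_, fun h f => ?_⟩
  · have hterm (g : G) : σ g (p (LinearMap.funLeft ℂ ℂ (g * ·) (A w))) = w := by
      have : LinearMap.funLeft ℂ ℂ (g * ·) (A w) = A ((σ g).symm w) := by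
        funext x
        simpa using (congrFun (hA g⁻¹ w) x).symm
      rw [this, hpA, LinearEquiv.apply_symm_apply]
    simp only [LinearMap.smul_apply, LinearMap.sum_apply, LinearMap.comp_apply,
      LinearEquiv.coe_coe, hterm, Finset.sum_const, Finset.card_univ,
      ← Nat.cast_smul_eq_nsmul ℂ, smul_smul, inv_mul_cancel₀ hcard, one_smul]
  · simp only [LinearMap.smul_apply, LinearMap.sum_apply, LinearMap.comp_apply,
      LinearEquiv.coe_coe, map_smul, map_sum]
    congr 1
    refine Fintype.sum_equiv (Equiv.mulLeft h⁻¹) _ _ fun g => ?_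
    have : LinearMap.funLeft ℂ ℂ (g * ·) (translate h f) =
        LinearMap.funLeft ℂ ℂ (h⁻¹ * g * ·) f := by
      funext x
      simp [mul_assoc]
    rw [this, Equiv.coe_mulLeft, ← LinearEquiv.mul_apply, ← map_mul, mul_inv_cancel_left]

variable (U : Subgroup G) (χ : U →* ℂ)

def hecke : Set (G → ℂ) :=
  {φ | (∀ (g : G) (k : U), φ (g * k) = (χ k)⁻¹ * φ g) ∧
    ∀ (g : G) (k : U), φ (k * g) = (χ k)⁻¹ * φ g}

def IsEquivariantEnd (E : indChar U χ →ₗ[ℂ] indChar U χ) : Prop :=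
  ∀ (g : G) (f : indChar U χ), E (indRep U χ g f) = indRep U χ g (E f)

def conv [Fintype G] (φ ψ : G → ℂ) (x : G) : ℂ := ∑ g, φ g * ψ (g⁻¹ * x)

def deltaFun : G → ℂ := fun g => if h : g ∈ U then (χ ⟨g, h⟩)⁻¹ else 0

lemma deltaFun_mem_hecke : deltaFun U χ ∈ hecke U χ := by
  constructor
  · intro g k
    by_cases hg : g ∈ U
    · rw [deltaFun, deltaFun, dif_pos ((U.mul_mem_cancel_right k.2).mpr hg), dif_pos hg,
        show (⟨g * k, _⟩ : U) = ⟨g, hg⟩ * k from rfl, map_mul, mul_inv, mul_comm]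
    · rw [deltaFun, deltaFun, dif_neg (mt (U.mul_mem_cancel_right k.2).mp hg), dif_neg hg,
        mul_zero]
  · intro g k
    by_cases hg : g ∈ U
    · rw [deltaFun, deltaFun, dif_pos ((U.mul_mem_cancel_left k.2).mpr hg), dif_pos hg,
        show (⟨k * g, _⟩ : U) = k * ⟨g, hg⟩ from rfl, map_mul, mul_inv]
    · rw [deltaFun, deltaFun, dif_neg (mt (U.mul_mem_cancel_left k.2).mp hg), dif_neg hg,
        mul_zero]

lemma deltaFun_of_mem {g : G} (hg : g ∈ U) : deltaFun U χ g = (χ ⟨g, hg⟩)⁻¹ := dif_pos hg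

lemma deltaFun_of_notMem {g : G} (hg : g ∉ U) : deltaFun U χ g = 0 := dif_neg hg

def indDelta : indChar U χ := ⟨deltaFun U χ, (deltaFun_mem_hecke U χ).1⟩

@[simp] lemma indDelta_apply_one : (indDelta U χ : G → ℂ) 1 = 1 := by
  simp [indDelta, deltaFun_of_mem U χ (one_mem U), show (⟨1, _⟩ : U) = 1 from rfl]

lemma indRep_indDelta (k : U) : indRep U χ k (indDelta U χ) = χ k • indDelta U χ := by
  ext x
  have h := (deltaFun_mem_hecke U χ).2 x k⁻¹
  simp only [Subgroup.coe_inv, map_inv, inv_inv] at h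
  simpa [indDelta] using h

lemma hecke_apply_eq_zero_of_mul_eq {φ : G → ℂ} (hφ : φ ∈ hecke U χ) {g : G} {k k' : U}
    (h : g * k = k' * g) (hk : χ k ≠ χ k') : φ g = 0 := by
  have hg := hφ.1 g k
  rw [h, hφ.2] at hg
  by_contra h0
  exact hk (inv_injective (mul_right_cancel₀ h0 hg)).symm

variable [Fintype G]

lemma conv_deltaFun {f : G → ℂ} (hf : f ∈ indChar U χ) :
    conv f (deltaFun U χ) = (Fintype.card U : ℂ) • f := by
  funext x
  have hterm (h : G) : f (x * h) * deltaFun U χ h⁻¹ = if h ∈ U then f x else 0 := by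
    by_cases hh : h ∈ U
    · have := hf x ⟨h, hh⟩
      simp only at this
      have hχ : χ ⟨h, hh⟩ ≠ 0 := ((Group.isUnit _).map χ).ne_zero
      rw [deltaFun, dif_pos (U.inv_mem hh), if_pos hh, this,
        show (⟨h⁻¹, _⟩ : U) = (⟨h, hh⟩ : U)⁻¹ from rfl, map_inv, inv_inv]
      field_simp
    · rw [deltaFun, dif_neg (mt U.inv_mem_iff.mp hh), if_neg hh, mul_zero]
  rw [conv, Fintype.sum_equiv (Equiv.mulLeft x⁻¹) _ (fun h => f (x * h) * deltaFun U χ h⁻¹)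
    fun g => by simp]
  simp [hterm, Finset.sum_ite, Fintype.card_subtype]

lemma card_smul_eq_sum_smul_indRep (f : indChar U χ) :
    (Fintype.card U : ℂ) • f = ∑ g : G, (f : G → ℂ) g • indRep U χ g (indDelta U χ) := by
  ext x
  rw [Submodule.coe_smul, ← conv_deltaFun U χ f.2]
  simp [conv, indDelta]

lemma card_smul_coe_eq_conv {E : indChar U χ →ₗ[ℂ] indChar U χ} (hE : IsEquivariantEnd U χ E)
    (f : indChar U χ) :
    (Fintype.card U : ℂ) • (E f : G → ℂ) = conv f (E (indDelta U χ)) := by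
  rw [← Submodule.coe_smul, ← map_smul, card_smul_eq_sum_smul_indRep, map_sum]
  ext x
  simp [conv, hE _ _]

lemma coe_apply_indDelta_mem_hecke {E : indChar U χ →ₗ[ℂ] indChar U χ}
    (hE : IsEquivariantEnd U χ E) : (E (indDelta U χ) : G → ℂ) ∈ hecke U χ := by
  refine ⟨(E (indDelta U χ)).2, fun g k => ?_⟩
  have h : indRep U χ k (E (indDelta U χ)) = χ k • E (indDelta U χ) := by
    rw [← hE, indRep_indDelta, map_smul]
  have hg := congrArg (fun f : indChar U χ => (f : G → ℂ) (k * g)) h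
  simp only [coe_indRep_apply, translate_apply, inv_mul_cancel_left, Submodule.coe_smul,
    Pi.smul_apply, smul_eq_mul] at hg
  rw [hg, inv_mul_cancel_left₀ ((Group.isUnit k).map χ).ne_zero]

lemma conv_mem_hecke {φ ψ : G → ℂ} (hφ : φ ∈ hecke U χ) (hψ : ψ ∈ hecke U χ) :
    conv φ ψ ∈ hecke U χ := by
  refine ⟨fun x k => ?_, fun x k => ?_⟩
  · simp only [conv, ← mul_assoc _ x, hψ.1, Finset.mul_sum]
    exact Finset.sum_congr rfl fun g _ => by ring
  · rw [conv, conv, Finset.mul_sum]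
    refine Fintype.sum_equiv (Equiv.mulLeft (k : G)⁻¹) _ _ fun g => ?_
    have h := hφ.2 g k⁻¹
    simp only [Subgroup.coe_inv, map_inv, inv_inv] at h
    simp only [Equiv.coe_mulLeft, h, mul_inv_rev, inv_inv, mul_assoc]
    rw [inv_mul_cancel_left₀ ((Group.isUnit k).map χ).ne_zero]

lemma conv_comm_of_antiInvolution {τ : G → G} (hanti : ∀ x y, τ (x * y) = τ y * τ x)
    (hinv : ∀ x, τ (τ x) = x) (hfix : ∀ φ ∈ hecke U χ, ∀ g, φ (τ g) = φ g)
    {φ ψ : G → ℂ} (hφ : φ ∈ hecke U χ) (hψ : ψ ∈ hecke U χ) : conv φ ψ = conv ψ φ := by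
  have hτ_one : τ 1 = 1 := by simpa using hanti 1 1
  have hτ_inv (g : G) : τ g⁻¹ = (τ g)⁻¹ :=
    eq_inv_of_mul_eq_one_left (by rw [← hanti, mul_inv_cancel, hτ_one])
  funext x
  calc conv φ ψ x = conv φ ψ (τ x) := (hfix _ (conv_mem_hecke U χ hφ hψ) x).symm
    _ = ∑ g, φ g * ψ (x * g⁻¹) :=
        (Fintype.sum_equiv ⟨τ, τ, hinv, hinv⟩ _ _ fun g => by
          simp [← hτ_inv, ← hanti, hfix φ hφ, hfix ψ hψ]).symm
    _ = conv ψ φ x :=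
        Fintype.sum_equiv ⟨fun g => x * g⁻¹, fun g => g⁻¹ * x, fun g => by simp,
          fun g => by simp⟩ _ _ fun g => by simp [mul_comm]

lemma commute_of_antiInvolution {τ : G → G} (hanti : ∀ x y, τ (x * y) = τ y * τ x)
    (hinv : ∀ x, τ (τ x) = x) (hfix : ∀ φ ∈ hecke U χ, ∀ g, φ (τ g) = φ g)
    {E E' : indChar U χ →ₗ[ℂ] indChar U χ} (hE : IsEquivariantEnd U χ E)
    (hE' : IsEquivariantEnd U χ E') : E ∘ₗ E' = E' ∘ₗ E := by
  have hcard : (Fintype.card U : ℂ) ≠ 0 := Nat.cast_ne_zero.mpr Fintype.card_ne_zero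
  have hEE' : IsEquivariantEnd U χ (E ∘ₗ E') := fun g f => by simp [hE _ _, hE' _ _]
  have hE'E : IsEquivariantEnd U χ (E' ∘ₗ E) := fun g f => by simp [hE _ _, hE' _ _]
  have hδ : (E ∘ₗ E') (indDelta U χ) = (E' ∘ₗ E) (indDelta U χ) := by
    refine Subtype.ext (smul_right_injective (G → ℂ) hcard ?_)
    simp only [LinearMap.comp_apply, card_smul_coe_eq_conv U χ hE, card_smul_coe_eq_conv U χ hE']
    exact conv_comm_of_antiInvolution U χ hanti hinv hfix
      (coe_apply_indDelta_mem_hecke U χ hE') (coe_apply_indDelta_mem_hecke U χ hE)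
  refine LinearMap.ext fun f => Subtype.ext (smul_right_injective (G → ℂ) hcard ?_)
  simp only [card_smul_coe_eq_conv U χ hEE', card_smul_coe_eq_conv U χ hE'E, hδ]

/-- For `A ≠ 0` and `B` in `Hom_G(W, Ind_U^G χ)`, the endomorphisms `A ∘ π` and `B ∘ π` commute,
where `π` is an equivariant left inverse of `A`; Schur's lemma applied to `π ∘ B` then gives
`B ∈ ℂ A`. -/
lemma finrank_homGIndChar_le_one_of_commute
    (hcomm : ∀ E E', IsEquivariantEnd U χ E → IsEquivariantEnd U χ E' → E ∘ₗ E' = E' ∘ₗ E)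
    [FiniteDimensional ℂ W] {σ : G →* (W ≃ₗ[ℂ] W)} (hσ : IsIrreducibleRep σ) :
    Module.finrank ℂ (homGIndChar U χ σ) ≤ 1 := by
  rcases eq_or_ne (homGIndChar U χ σ) ⊥ with h | h
  · rw [h, finrank_bot]
    exact zero_le_one
  obtain ⟨A, hA, hA0⟩ := (Submodule.ne_bot_iff _).mp h
  obtain ⟨π, hπA, hπ⟩ := exists_equivariant_leftInverse hA.2
    (hσ.ker_eq_bot hA0 fun g w hw => by rw [hA.2, hw]; rfl)
  let endOf (B : W →ₗ[ℂ] (G → ℂ)) (hB : B ∈ homGIndChar U χ σ) :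
      indChar U χ →ₗ[ℂ] indChar U χ :=
    (B ∘ₗ π ∘ₗ (indChar U χ).subtype).codRestrict _ fun f => hB.1 _
  have hend (B : W →ₗ[ℂ] (G → ℂ)) (hB : B ∈ homGIndChar U χ σ) :
      IsEquivariantEnd U χ (endOf B hB) := fun g f =>
    Subtype.ext (by simp [endOf, hπ, hB.2])
  have hle : homGIndChar U χ σ ≤ ℂ ∙ A := by
    intro B hB
    obtain ⟨c, hc⟩ := hσ.exists_eq_smul_of_commute (π ∘ₗ B) fun g w => by simp [hB.2, hπ]
    refine Submodule.mem_span_singleton.mpr ⟨c, LinearMap.ext fun w => ?_⟩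
    have := congrArg Subtype.val
      (LinearMap.congr_fun (hcomm _ _ (hend A hA) (hend B hB)) ⟨A w, hA.1 w⟩)
    simp only [endOf, LinearMap.comp_apply, LinearMap.codRestrict_apply, Submodule.subtype_apply,
      hπA] at this
    rw [LinearMap.smul_apply, ← this, ← LinearMap.comp_apply π, hc, map_smul]
  calc Module.finrank ℂ (homGIndChar U χ σ) ≤ Module.finrank ℂ (ℂ ∙ A) :=
        Submodule.finrank_mono hle
    _ = 1 := finrank_span_singleton hA0

theorem isMultFreeChar_of_antiInvolution {τ : G → G} (hanti : ∀ x y, τ (x * y) = τ y * τ x)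
    (hinv : ∀ x, τ (τ x) = x) (hfix : ∀ φ ∈ hecke U χ, ∀ g, φ (τ g) = φ g) :
    IsMultFreeChar U χ := fun _ _ _ _ _ hσ =>
  finrank_homGIndChar_le_one_of_commute U χ
    (fun _ _ hE hE' => commute_of_antiInvolution U χ hanti hinv hfix hE hE') hσ

end GelfandTrick

section GL2

open Matrix Matrix.GeneralLinearGroup

variable {K : Type} [Field K]

lemma det_fin_two_ne_zero (g : GL (Fin 2) K) : g 0 0 * g 1 1 - g 0 1 * g 1 0 ≠ 0 := by
  simpa [det_fin_two] using g.det_ne_zero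

def unip (x : K) : unipotent K := ⟨upperRightHom x, x, rfl⟩

@[simp] lemma coe_unip (x : K) : (unip x : GL (Fin 2) K) = upperRightHom x := rfl

lemma unip_add (x y : K) : unip (x + y) = unip x * unip y :=
  Subtype.ext (AddChar.map_add_eq_mul _ _ _)

lemma unip_surjective : Function.Surjective (unip : K → unipotent K) := by
  rintro ⟨g, x, hg⟩
  exact ⟨x, Subtype.ext (Units.ext hg.symm)⟩

lemma exists_unip_ne_one {χ : unipotent K →* ℂ} (hχ : χ ≠ 1) : ∃ r : K, χ (unip r) ≠ 1 := by
  by_contra! h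
  exact hχ (MonoidHom.ext fun k => by obtain ⟨r, rfl⟩ := unip_surjective k; exact h r)

/-- `g ↦ w gᵀ w` with `w = (0 1; 1 0)`. -/
def antiTranspose (g : GL (Fin 2) K) : GL (Fin 2) K :=
  mkOfDetNeZero !![g 1 1, g 0 1; g 1 0, g 0 0] (by
    simpa [det_fin_two, mul_comm] using g.det_ne_zero)

lemma antiTranspose_mul (x y : GL (Fin 2) K) :
    antiTranspose (x * y) = antiTranspose y * antiTranspose x := by
  ext i j
  fin_cases i <;> fin_cases j <;> simp [antiTranspose, mul_apply, Fin.sum_univ_two] <;> ring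

lemma antiTranspose_antiTranspose (g : GL (Fin 2) K) : antiTranspose (antiTranspose g) = g := by
  ext i j
  fin_cases i <;> fin_cases j <;> simp [antiTranspose]

lemma antiTranspose_eq_self {g : GL (Fin 2) K} (h : g 0 0 = g 1 1) : antiTranspose g = g := by
  ext i j
  fin_cases i <;> fin_cases j <;> simp [antiTranspose, h]

/-- Bruhat decomposition of the big cell (`m` is in fact antidiagonal). -/
lemma exists_eq_unip_mul_mul_unip {g : GL (Fin 2) K} (hc : g 1 0 ≠ 0) :
    ∃ (x y : K) (m : GL (Fin 2) K), m 0 0 = m 1 1 ∧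
      g = (unip x : GL (Fin 2) K) * m * unip y := by
  refine ⟨g 0 0 / g 1 0, g 1 1 / g 1 0,
    (unip (-(g 0 0 / g 1 0)) : GL (Fin 2) K) * g * unip (-(g 1 1 / g 1 0)), ?_, ?_⟩
  · simp [mul_apply, Fin.sum_univ_two, vecMul, dotProduct]
    field_simp
    ring
  · simp only [coe_unip, AddChar.map_neg_eq_inv]
    group

/-- `g (1 s; 0 1) = (1 s + r; 0 1) g` for a suitable `s`, with `χ (1 r; 0 1) ≠ 1`. -/
lemma hecke_apply_eq_zero_of_upperTriangular {χ : unipotent K →* ℂ} (hχ : χ ≠ 1)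
    {φ : GL (Fin 2) K → ℂ} (hφ : φ ∈ hecke (unipotent K) χ) {g : GL (Fin 2) K}
    (hc : g 1 0 = 0) (had : g 0 0 ≠ g 1 1) : φ g = 0 := by
  obtain ⟨r, hr⟩ := exists_unip_ne_one hχ
  have hd : g 1 1 ≠ 0 := fun h => by simpa [hc, h] using det_fin_two_ne_zero g
  have hsub : g 0 0 - g 1 1 ≠ 0 := sub_ne_zero.mpr had
  set s := r * g 1 1 / (g 0 0 - g 1 1)
  refine hecke_apply_eq_zero_of_mul_eq _ _ hφ (k := unip s) (k' := unip (s + r)) ?_ ?_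
  · ext i j
    fin_cases i <;> fin_cases j <;> simp [mul_apply, Fin.sum_univ_two, hc, s]
    field_simp
    ring
  · rw [unip_add, map_mul]
    exact fun h => hr ((mul_eq_left₀ ((Group.isUnit _).map χ).ne_zero).mp h.symm)

theorem hecke_apply_antiTranspose {χ : unipotent K →* ℂ} (hχ : χ ≠ 1) {φ : GL (Fin 2) K → ℂ}
    (hφ : φ ∈ hecke (unipotent K) χ) (g : GL (Fin 2) K) : φ (antiTranspose g) = φ g := by
  by_cases hc : g 1 0 = 0
  · by_cases had : g 0 0 = g 1 1
    · rw [antiTranspose_eq_self had]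
    · rw [hecke_apply_eq_zero_of_upperTriangular hχ hφ hc had,
        hecke_apply_eq_zero_of_upperTriangular hχ hφ (by simp [antiTranspose, hc])
          (by simpa [antiTranspose] using Ne.symm had)]
  · obtain ⟨x, y, m, hm, rfl⟩ := exists_eq_unip_mul_mul_unip hc
    have hunip (z : K) : antiTranspose (unip z : GL (Fin 2) K) = unip z :=
      antiTranspose_eq_self (by simp)
    rw [antiTranspose_mul, antiTranspose_mul, hunip, hunip, antiTranspose_eq_self hm,
      hφ.1, hφ.2, hφ.1, hφ.2, mul_left_comm]

end GL2

section PrincipalSeries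

open Matrix Matrix.GeneralLinearGroup

variable (K : Type) [Field K]

def borel : Subgroup (GL (Fin 2) K) where
  carrier := {g | g 1 0 = 0}
  one_mem' := by simp
  mul_mem' {x y} hx hy := by simp_all [mul_apply, Fin.sum_univ_two]
  inv_mem' {x} hx := by simp_all [inv_def, adjugate_fin_two]

variable {K}

lemma mem_borel {g : GL (Fin 2) K} : g ∈ borel K ↔ g 1 0 = 0 := Iff.rfl

def borelChar (μ : MulChar K ℂ) : borel K →* ℂ where
  toFun b := μ ((b : GL (Fin 2) K) 0 0)
  map_one' := by simp
  map_mul' x y := by simp [mul_apply, Fin.sum_univ_two, mem_borel.mp y.2]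

@[simp] lemma borelChar_apply (μ : MulChar K ℂ) (b : borel K) :
    borelChar μ b = μ ((b : GL (Fin 2) K) 0 0) := rfl

abbrev principalSeries (μ : MulChar K ℂ) : Submodule ℂ (GL (Fin 2) K → ℂ) :=
  indChar (borel K) (borelChar μ)

abbrev principalSeriesRep (μ : MulChar K ℂ) :
    GL (Fin 2) K →* (principalSeries μ ≃ₗ[ℂ] principalSeries μ) :=
  indRep (borel K) (borelChar μ)

abbrev principalSeriesDelta (μ : MulChar K ℂ) : principalSeries μ :=
  indDelta (borel K) (borelChar μ)

def weyl : GL (Fin 2) K := mkOfDetNeZero !![0, 1; 1, 0] (by simp)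

def bigCell (x : K) : GL (Fin 2) K := upperRightHom x * weyl

@[simp] lemma bigCell_apply (x : K) (i j : Fin 2) : bigCell x i j = !![x, 1; 1, 0] i j := by
  fin_cases i <;> fin_cases j <;> simp [bigCell, weyl, mul_apply, Fin.sum_univ_two]

lemma weyl_mul_weyl : (weyl : GL (Fin 2) K) * weyl = 1 := by
  ext i j
  fin_cases i <;> fin_cases j <;> simp [weyl]

lemma inv_bigCell (x : K) : (bigCell x)⁻¹ = weyl * upperRightHom (-x) := by
  refine inv_eq_of_mul_eq_one_right ?_
  rw [bigCell, mul_assoc, ← mul_assoc weyl, weyl_mul_weyl, one_mul, ← AddChar.map_add_eq_mul,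
    add_neg_cancel, AddChar.map_zero_eq_one]

lemma upperRightHom_mul_bigCell (s x : K) : upperRightHom s * bigCell x = bigCell (s + x) := by
  rw [bigCell, bigCell, ← mul_assoc, ← AddChar.map_add_eq_mul]

variable {μ : MulChar K ℂ} {f : GL (Fin 2) K → ℂ}

lemma apply_eq_of_mem_borel (hf : f ∈ principalSeries μ) {g : GL (Fin 2) K}
    (hg : g ∈ borel K) : f g = (μ (g 0 0))⁻¹ * f 1 := by
  simpa using hf 1 ⟨g, hg⟩

/-- `g = bigCell (a / c) * (c d; 0 *)` for `g = (a b; c d)`. -/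
lemma apply_eq_of_notMem_borel (hf : f ∈ principalSeries μ) {g : GL (Fin 2) K}
    (hg : g ∉ borel K) : f g = (μ (g 1 0))⁻¹ * f (bigCell (g 0 0 / g 1 0)) := by
  set b := (bigCell (g 0 0 / g 1 0))⁻¹ * g
  have hb : b ∈ borel K := by
    simp [b, mem_borel, inv_bigCell, weyl, mul_apply, Fin.sum_univ_two]
    field_simp [mem_borel.not.mp hg]
    ring
  have hb00 : b 0 0 = g 1 0 := by simp [b, inv_bigCell, weyl, mul_apply, Fin.sum_univ_two]
  simpa [b, hb00] using hf (bigCell (g 0 0 / g 1 0)) ⟨b, hb⟩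

lemma apply_mul_upperRightHom (hf : f ∈ principalSeries μ) (g : GL (Fin 2) K) (t : K) :
    f (g * upperRightHom t) = f g := by
  simpa using hf g ⟨upperRightHom t, by simp [mem_borel]⟩

lemma principalSeries_ext {f f' : GL (Fin 2) K → ℂ} (hf : f ∈ principalSeries μ)
    (hf' : f' ∈ principalSeries μ) (h1 : f 1 = f' 1) (hw : ∀ x, f (bigCell x) = f' (bigCell x)) :
    f = f' := by
  funext g
  by_cases hg : g ∈ borel K
  · rw [apply_eq_of_mem_borel hf hg, apply_eq_of_mem_borel hf' hg, h1]
  · rw [apply_eq_of_notMem_borel hf hg, apply_eq_of_notMem_borel hf' hg, hw]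

lemma principalSeriesDelta_apply_bigCell (x : K) :
    (principalSeriesDelta μ : GL (Fin 2) K → ℂ) (bigCell x) = 0 :=
  deltaFun_of_notMem _ _ (by simp [mem_borel])

lemma principalSeriesDelta_apply_inv_bigCell (x : K) :
    (principalSeriesDelta μ : GL (Fin 2) K → ℂ) (bigCell x)⁻¹ = 0 :=
  deltaFun_of_notMem _ _ (by simp [mem_borel, inv_bigCell, weyl, mul_apply, Fin.sum_univ_two])

lemma principalSeriesDelta_apply_inv_bigCell_mul_bigCell (x y : K) :
    (principalSeriesDelta μ : GL (Fin 2) K → ℂ) ((bigCell x)⁻¹ * bigCell y) =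
      if x = y then 1 else 0 := by
  split_ifs with hxy
  · simp [hxy]
  · refine deltaFun_of_notMem _ _ ?_
    simp only [mem_borel, inv_bigCell, weyl, coe_mul, mul_apply, Fin.sum_univ_two]
    simpa [sub_eq_add_neg] using sub_ne_zero.mpr (Ne.symm hxy)

lemma principalSeries_eq_sum [Fintype K] (f : principalSeries μ) :
    f = (f : GL (Fin 2) K → ℂ) 1 • principalSeriesDelta μ +
      ∑ x, (f : GL (Fin 2) K → ℂ) (bigCell x) •
        principalSeriesRep μ (bigCell x) (principalSeriesDelta μ) := by
  refine Subtype.ext (principalSeries_ext f.2 (Submodule.coe_mem _) ?_ fun y => ?_)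
  · simp [principalSeriesDelta_apply_inv_bigCell]
  · simp [principalSeriesDelta_apply_bigCell, principalSeriesDelta_apply_inv_bigCell_mul_bigCell]

lemma sum_apply_upperRightHom_mul_bigCell [Fintype K] (g : GL (Fin 2) K → ℂ) (t : K) :
    ∑ x, g (upperRightHom t * bigCell x) = ∑ x, g (bigCell x) := by
  simp only [upperRightHom_mul_bigCell]
  exact Fintype.sum_equiv (Equiv.addLeft t) _ _ fun _ => rfl

lemma sum_principalSeriesRep_upperRightHom_apply_one [Fintype K] (f : principalSeries μ) :
    ((∑ t, principalSeriesRep μ (upperRightHom t) f : principalSeries μ) : GL (Fin 2) K → ℂ) 1 =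
      Fintype.card K * (f : GL (Fin 2) K → ℂ) 1 := by
  have h (t : K) : (f : GL (Fin 2) K → ℂ) (upperRightHom t)⁻¹ = (f : GL (Fin 2) K → ℂ) 1 := by
    simpa [← AddChar.map_neg_eq_inv] using apply_mul_upperRightHom f.2 1 (-t)
  simp only [Submodule.coe_sum, Finset.sum_apply, coe_indRep_apply, translate_apply, mul_one, h,
    Finset.sum_const, Finset.card_univ, nsmul_eq_mul]

lemma sum_principalSeriesRep_upperRightHom_apply_bigCell [Fintype K] (f : principalSeries μ)
    (x : K) :
    ((∑ t, principalSeriesRep μ (upperRightHom t) f : principalSeries μ) : GL (Fin 2) K → ℂ)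
      (bigCell x) = ∑ t, (f : GL (Fin 2) K → ℂ) (bigCell t) := by
  simp only [Submodule.coe_sum, Finset.sum_apply, coe_indRep_apply, translate_apply,
    ← AddChar.map_neg_eq_inv, upperRightHom_mul_bigCell]
  exact Fintype.sum_equiv (Equiv.subLeft x) _ _ fun t => by simp [neg_add_eq_sub]

lemma exists_mem_apply_one_ne_zero {p : Submodule ℂ (principalSeries μ)}
    (hp : ∀ (g : GL (Fin 2) K) (f : principalSeries μ), f ∈ p → principalSeriesRep μ g f ∈ p)
    (hne : p ≠ ⊥) : ∃ f ∈ p, (f : GL (Fin 2) K → ℂ) 1 ≠ 0 := by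
  obtain ⟨f, hfp, hf0⟩ := (Submodule.ne_bot_iff p).mp hne
  by_cases h1 : (f : GL (Fin 2) K → ℂ) 1 = 0
  · obtain ⟨x, hx⟩ : ∃ x, (f : GL (Fin 2) K → ℂ) (bigCell x) ≠ 0 := by
      by_contra! h
      exact hf0 (Subtype.ext (principalSeries_ext f.2 (zero_mem _) h1 h))
    exact ⟨principalSeriesRep μ (bigCell x)⁻¹ f, hp _ _ hfp, by simpa using hx⟩
  · exact ⟨f, hfp, h1⟩

/-- `f` minus its translate by `diag(u, 1)`, where `μ u ≠ 1`, vanishes on the big cell but not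
at `1`. -/
lemma principalSeriesDelta_mem (hμ : μ ≠ 1) {p : Submodule ℂ (principalSeries μ)}
    (hp : ∀ (g : GL (Fin 2) K) (f : principalSeries μ), f ∈ p → principalSeriesRep μ g f ∈ p)
    {f : principalSeries μ} (hfp : f ∈ p) (h1 : (f : GL (Fin 2) K → ℂ) 1 ≠ 0)
    (hconst : ∀ x, (f : GL (Fin 2) K → ℂ) (bigCell x) = (f : GL (Fin 2) K → ℂ) (bigCell 0)) :
    principalSeriesDelta μ ∈ p := by
  obtain ⟨u, hu⟩ := MulChar.ne_one_iff.mp hμ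
  let d : GL (Fin 2) K := mkOfDetNeZero !![(u : K), 0; 0, 1] (by simp)
  set c := (1 - (μ u)⁻¹) * (f : GL (Fin 2) K → ℂ) 1
  have hc : c ≠ 0 := mul_ne_zero (sub_ne_zero.mpr fun h => hu (inv_eq_one.mp h.symm)) h1
  have hd_one : (f : GL (Fin 2) K → ℂ) d = (μ u)⁻¹ * (f : GL (Fin 2) K → ℂ) 1 :=
    apply_eq_of_mem_borel f.2 (by simp [mem_borel, d])
  have hd_bigCell (x : K) :
      (f : GL (Fin 2) K → ℂ) (d * bigCell x) = (f : GL (Fin 2) K → ℂ) (bigCell x) := by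
    rw [apply_eq_of_notMem_borel f.2 (by simp [mem_borel, d, mul_apply, Fin.sum_univ_two]),
      hconst, hconst x]
    simp [d, mul_apply, Fin.sum_univ_two]
  have heq : f - principalSeriesRep μ d⁻¹ f = c • principalSeriesDelta μ := by
    refine Subtype.ext (principalSeries_ext (Submodule.coe_mem _) (Submodule.coe_mem _) ?_
      fun x => ?_)
    · simp [hd_one, c, sub_mul]
    · simp [hd_bigCell, principalSeriesDelta_apply_bigCell]
  have hmem : c • principalSeriesDelta μ ∈ p := heq ▸ p.sub_mem hfp (hp _ _ hfp)
  simpa [smul_smul, inv_mul_cancel₀ hc] using p.smul_mem c⁻¹ hmem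

theorem isIrreducibleRep_principalSeriesRep [Fintype K] (hμ : μ ≠ 1) :
    IsIrreducibleRep (principalSeriesRep μ) := by
  refine ⟨fun h => ?_, fun p hp => or_iff_not_imp_left.mpr fun hne => ?_⟩
  · have : principalSeriesDelta μ = 0 := (Submodule.mem_bot ℂ).mp (h ▸ Submodule.mem_top)
    simpa using congrArg (fun f : principalSeries μ => (f : GL (Fin 2) K → ℂ) 1) this
  obtain ⟨f, hfp, hf1⟩ := exists_mem_apply_one_ne_zero hp hne
  have hδ : principalSeriesDelta μ ∈ p := by
    refine principalSeriesDelta_mem hμ hp (f := ∑ t, principalSeriesRep μ (upperRightHom t) f)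
      (p.sum_mem fun t _ => hp _ _ hfp) ?_ fun x => ?_
    · rw [sum_principalSeriesRep_upperRightHom_apply_one]
      exact mul_ne_zero (Nat.cast_ne_zero.mpr Fintype.card_ne_zero) hf1
    · rw [sum_principalSeriesRep_upperRightHom_apply_bigCell,
        sum_principalSeriesRep_upperRightHom_apply_bigCell]
  refine Submodule.eq_top_iff'.mpr fun f => ?_
  rw [principalSeries_eq_sum f]
  exact p.add_mem (p.smul_mem _ hδ) (p.sum_mem fun x _ => p.smul_mem _ (hp _ _ hδ))

lemma apply_principalSeriesRep_bigCell {ℓ : Module.Dual ℂ (principalSeries μ)}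
    (hℓ : ℓ ∈ equivariantDual (unipotent K) 1 (principalSeriesRep μ)) (x : K)
    (f : principalSeries μ) :
    ℓ (principalSeriesRep μ (bigCell x) f) = ℓ (principalSeriesRep μ (bigCell 0) f) := by
  have h := hℓ (unip x) (principalSeriesRep μ (bigCell 0) f)
  rwa [← LinearEquiv.mul_apply, ← map_mul, coe_unip, upperRightHom_mul_bigCell, add_zero,
    MonoidHom.one_apply, one_mul] at h

/-- A basis is given by evaluation at `1` and summation over the big cell. -/
theorem finrank_equivariantDual_principalSeriesRep [Fintype K] :
    Module.finrank ℂ (equivariantDual (unipotent K) 1 (principalSeriesRep μ)) = 2 := by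
  let ℓ₁ : Module.Dual ℂ (principalSeries μ) := LinearMap.proj 1 ∘ₗ (principalSeries μ).subtype
  let ℓ₂ : Module.Dual ℂ (principalSeries μ) :=
    ∑ x, LinearMap.proj (bigCell x) ∘ₗ (principalSeries μ).subtype
  have hℓ₁ : ℓ₁ ∈ equivariantDual (unipotent K) 1 (principalSeriesRep μ) := by
    intro k f
    obtain ⟨t, rfl⟩ := unip_surjective k
    simpa [ℓ₁, ← AddChar.map_neg_eq_inv] using apply_mul_upperRightHom f.2 1 (-t)
  have hℓ₂ : ℓ₂ ∈ equivariantDual (unipotent K) 1 (principalSeriesRep μ) := by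
    intro k f
    obtain ⟨t, rfl⟩ := unip_surjective k
    simpa [ℓ₂, ← AddChar.map_neg_eq_inv] using
      sum_apply_upperRightHom_mul_bigCell (f : GL (Fin 2) K → ℂ) (-t)
  let e : equivariantDual (unipotent K) 1 (principalSeriesRep μ) ≃ₗ[ℂ] ℂ × ℂ :=
    { toFun ℓ := (ℓ.1 (principalSeriesDelta μ),
        ℓ.1 (principalSeriesRep μ (bigCell 0) (principalSeriesDelta μ)))
      map_add' _ _ := rfl
      map_smul' _ _ := rfl
      invFun z := ⟨z.1 • ℓ₁ + z.2 • ℓ₂,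
        add_mem (Submodule.smul_mem _ _ hℓ₁) (Submodule.smul_mem _ _ hℓ₂)⟩
      left_inv ℓ := Subtype.ext <| LinearMap.ext fun f => by
        conv_rhs => rw [principalSeries_eq_sum f]
        simp [ℓ₁, ℓ₂, apply_principalSeriesRep_bigCell ℓ.2, Finset.sum_mul, mul_comm]
      right_inv z := by
        simp [ℓ₁, ℓ₂, principalSeriesDelta_apply_bigCell, principalSeriesDelta_apply_inv_bigCell,
          principalSeriesDelta_apply_inv_bigCell_mul_bigCell] }
  rw [e.finrank_eq, Module.finrank_prod, Module.finrank_self]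

end PrincipalSeries

lemma exists_mulChar_ne_one {K : Type} [Field K] [Fintype K] (hodd : Odd (Fintype.card K)) :
    ∃ μ : MulChar K ℂ, μ ≠ 1 := by
  have hK : ringChar K ≠ 2 := fun h =>
    Nat.not_even_iff_odd.mpr hodd (Nat.even_iff.mpr (FiniteField.even_card_iff_char_two.mp h))
  exact ⟨(quadraticChar K).ringHomComp (Int.castRingHom ℂ),
    (MulChar.ringHomComp_ne_one_iff Int.cast_injective).mpr (quadraticChar_ne_one hK)⟩

/-- Let `q` be an odd prime power, `G = GL(2,F_q)` and `U` the unipotent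
subgroup.  Then `(G,U,χ)` is a multiplicity-free triple for every nontrivial character `χ` of
`U`, but `(G,U)` is not a Gelfand pair: `Ind_U^G χ₀` (for the trivial character `χ₀`) is not
multiplicity-free — indeed some irreducible representation of `G` occurs in it with
multiplicity `2`. -/
theorem statement18 (hodd : Odd (Fintype.card F)) :
    (∀ χ : ↥(unipotent F) →* ℂ, χ ≠ 1 → IsMultFreeChar (unipotent F) χ) ∧
    ¬ IsMultFreeChar (unipotent F) (1 : ↥(unipotent F) →* ℂ) ∧
    ∃ r : RepWitness (Matrix.GeneralLinearGroup (Fin 2) F), IsIrreducibleRep r.σ ∧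
      Module.finrank ℂ ↥(homGIndChar (unipotent F) (1 : ↥(unipotent F) →* ℂ) r.σ) = 2 := by
  obtain ⟨μ, hμ⟩ := exists_mulChar_ne_one hodd
  have hirr := isIrreducibleRep_principalSeriesRep hμ
  have hmult : Module.finrank ℂ (homGIndChar (unipotent F) 1 (principalSeriesRep μ)) = 2 := by
    rw [(frobeniusReciprocity _ _ _).finrank_eq, finrank_equivariantDual_principalSeriesRep]
  refine ⟨fun χ hχ => isMultFreeChar_of_antiInvolution (unipotent F) χ antiTranspose_mul
      antiTranspose_antiTranspose fun φ hφ => hecke_apply_antiTranspose hχ hφ,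
    fun h => ?_, ⟨⟨principalSeries μ, principalSeriesRep μ⟩, hirr, hmult⟩⟩
  have := h _ _ hirr
  omega

end GLMF
end
end
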